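/- Let p ≥ 2, σ > 0, μ ∈ ℝ^{p-1}, and η_t, η_ℓ ∈ ℝ. With C(η) = [[1, η μᵀ], [η μ, σ² I_{p-1} + η² μ μᵀ]], one has tr(C(η_t) C(η_ℓ)^{-1}) = p + (η_t − η_ℓ)² ‖μ‖² / σ². -/

import Mathlib

/-! Writing `L(η)` for the lower block shear `[[1, 0], [η μ, I]]` and `D = diag(1, σ² I)`, one has
`C(η) = L(η) D L(η)ᵀ`. The shears form a one-parameter group, `L(ηl)⁻¹ L(ηt) = L(ηt - ηl)`, so by
cyclicity of the trace `tr(C(ηt) C(ηl)⁻¹) = tr(C(ηt - ηl) D⁻¹)`, which is read off the diagonal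
blocks. -/

open Matrix

namespace Matrix

variable {m n R : Type*} [Fintype m] [Fintype n]

theorem trace_fromBlocks [AddCommMonoid R] (A : Matrix m m R) (B : Matrix m n R)
    (C : Matrix n m R) (D : Matrix n n R) : trace (fromBlocks A B C D) = trace A + trace D := by
  simp [trace, Fintype.sum_sum_type]

variable [DecidableEq m] [DecidableEq n]

theorem trace_mul_mul_transpose_mul_inv [CommRing R] (P Q D : Matrix n n R) :
    trace (P * D * Pᵀ * (Q * D * Qᵀ)⁻¹) = trace (Q⁻¹ * P * D * (Q⁻¹ * P)ᵀ * D⁻¹) := by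
  rw [mul_inv_rev, mul_inv_rev, ← transpose_nonsing_inv, transpose_mul]
  simp only [Matrix.mul_assoc]
  rw [trace_mul_comm Q⁻¹]
  simp only [Matrix.mul_assoc]

def lowerShear [Zero R] [One R] (A : Matrix n m R) : Matrix (m ⊕ n) (m ⊕ n) R :=
  fromBlocks 1 0 A 1

theorem lowerShear_mul_lowerShear [Semiring R] (A B : Matrix n m R) :
    lowerShear A * lowerShear B = lowerShear (A + B) := by
  simp [lowerShear, fromBlocks_multiply]

theorem inv_lowerShear [CommRing R] (A : Matrix n m R) : (lowerShear A)⁻¹ = lowerShear (-A) :=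
  inv_eq_left_inv <| by rw [lowerShear_mul_lowerShear, neg_add_cancel, lowerShear, fromBlocks_one]

theorem lowerShear_mul_fromBlocks_mul_transpose [CommSemiring R] (A : Matrix n m R)
    (P : Matrix m m R) (Q : Matrix n n R) :
    lowerShear A * fromBlocks P 0 0 Q * (lowerShear A)ᵀ =
      fromBlocks P (P * Aᵀ) (A * P) (A * P * Aᵀ + Q) := by
  simp [lowerShear, fromBlocks_transpose, fromBlocks_multiply]

theorem inv_fromBlocks_one_smul_one [Field R] {c : R} (hc : c ≠ 0) :
    (fromBlocks (1 : Matrix m m R) 0 0 (c • 1 : Matrix n n R))⁻¹ = fromBlocks 1 0 0 (c⁻¹ • 1) :=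
  inv_eq_right_inv <| by simp [fromBlocks_multiply, hc]

end Matrix

theorem trace_C_mul_C_inv_general
    (k : ℕ) (σ : ℝ) (hσ : 0 < σ) (μ : Fin k → ℝ) (ηt ηl : ℝ) :
    let C : ℝ → Matrix (Fin 1 ⊕ Fin k) (Fin 1 ⊕ Fin k) ℝ := fun η =>
      Matrix.fromBlocks (Matrix.of fun _ _ => 1) (Matrix.of fun _ j => η * μ j)
        (Matrix.of fun i _ => η * μ i)
        (σ ^ 2 • (1 : Matrix (Fin k) (Fin k) ℝ) + η ^ 2 • Matrix.vecMulVec μ μ)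
    Matrix.trace (C ηt * (C ηl)⁻¹) = (k + 1 : ℝ) + (ηt - ηl) ^ 2 * (μ ⬝ᵥ μ) / σ ^ 2 := by
  intro C
  have hσ2 : σ ^ 2 ≠ 0 := pow_ne_zero 2 hσ.ne'
  set D := fromBlocks (1 : Matrix (Fin 1) (Fin 1) ℝ) 0 0 (σ ^ 2 • 1 : Matrix (Fin k) (Fin k) ℝ)
  set L := fun η : ℝ => lowerShear (η • replicateCol (Fin 1) μ)
  have hC : ∀ η, C η = L η * D * (L η)ᵀ := by
    intro η
    rw [lowerShear_mul_fromBlocks_mul_transpose, Matrix.mul_one, Matrix.one_mul, transpose_smul,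
      transpose_replicateCol, Matrix.smul_mul, Matrix.mul_smul, smul_smul, ← sq, add_comm,
      show replicateCol (Fin 1) μ * replicateRow (Fin 1) μ = vecMulVec μ μ from
        (vecMulVec_eq _ μ μ).symm]
    simp only [C]
    congr 1
    ext i j
    rw [of_apply, Subsingleton.elim i j, one_apply_eq]
  have hL : (L ηl)⁻¹ * L ηt = L (ηt - ηl) := by
    rw [inv_lowerShear, lowerShear_mul_lowerShear, ← neg_smul, ← add_smul, neg_add_eq_sub]
  rw [hC, hC, trace_mul_mul_transpose_mul_inv, hL, ← hC, inv_fromBlocks_one_smul_one hσ2,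
    fromBlocks_multiply, trace_fromBlocks]
  have htrace_one : trace (of fun _ _ => 1 : Matrix (Fin 1) (Fin 1) ℝ) = 1 := by simp [trace]
  simp only [Matrix.mul_zero, add_zero, zero_add, Matrix.mul_one, Matrix.mul_smul, trace_smul,
    trace_add, trace_one, trace_vecMulVec, htrace_one, Fintype.card_fin, smul_eq_mul]
  field_simp
  ring

/-- For `p = k+1 ≥ 2`, `σ > 0`, `μ ∈ ℝ^{p-1}`, and `η_t, η_ℓ ∈ ℝ`,
`tr(C(η_t) C(η_ℓ)⁻¹) = p + (η_t − η_ℓ)² ‖μ‖² / σ²` where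
`C(η) = [[1, ημᵀ],[ημ, σ²I + η²μμᵀ]]`. -/
theorem trace_C_mul_C_inv
    (k : ℕ) (hk : 1 ≤ k) (σ : ℝ) (hσ : 0 < σ) (μ : Fin k → ℝ) (ηt ηl : ℝ) :
    let C : ℝ → Matrix (Fin 1 ⊕ Fin k) (Fin 1 ⊕ Fin k) ℝ := fun η =>
      Matrix.fromBlocks (Matrix.of fun _ _ => 1) (Matrix.of fun _ j => η * μ j)
        (Matrix.of fun i _ => η * μ i)
        (σ ^ 2 • (1 : Matrix (Fin k) (Fin k) ℝ) + η ^ 2 • Matrix.vecMulVec μ μ)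
    Matrix.trace (C ηt * (C ηl)⁻¹) = (k + 1 : ℝ) + (ηt - ηl) ^ 2 * (μ ⬝ᵥ μ) / σ ^ 2 :=
  trace_C_mul_C_inv_general k σ hσ μ ηt ηl
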